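/- Let Y be a linear subspace of ℂ² (with the standard hermitian inner product) and K a complex 2×2 matrix. Let u : [0,1] → ℂ be twice continuously differentiable with K·Γ₁u − Γ₂u ∈ Y^⊥, and let h ∈ L²((0,1),ℂ) with Γ₁h ∈ Y. Then the weak-formulation identity holds: ∫₀¹ u(x)·conj(h(x))dx + (K·Γ₁u | Γ₁h)_{ℂ²} = ∫₀¹ P(−u″)(x)·conj(Ph(x))dx + μ₀(−u″)·conj(μ₀(h)); i.e., the form a_K applied to (u,h) equals the H⁻¹(T)-type inner product of −u″ with h. -/

import Mathlib

open MeasureTheory intervalIntegral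

/-- `𝓘g(x) = ∫₀ˣ g(y) dy` -/
noncomputable def Iprim (g : ℝ → ℂ) (x : ℝ) : ℂ := ∫ y in (0:ℝ)..x, g y

/-- `Pg(x) = 𝓘g(x) − ∫₀¹ 𝓘g(z) dz` -/
noncomputable def Pfun (g : ℝ → ℂ) (x : ℝ) : ℂ := Iprim g x - ∫ z in (0:ℝ)..1, Iprim g z

/-- `μ₀(g) = ∫₀¹ g(x) dx` -/
noncomputable def mu0 (g : ℝ → ℂ) : ℂ := ∫ x in (0:ℝ)..1, g x

/-- `μ₁(g) = ∫₀¹ (1−x) g(x) dx` -/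
noncomputable def mu1 (g : ℝ → ℂ) : ℂ := ∫ x in (0:ℝ)..1, ((1 - x : ℝ) : ℂ) * g x

/-- `Γ₁u = (μ₀(u), μ₁(u)) ∈ ℂ²` -/
noncomputable def Gamma1 (u : ℝ → ℂ) : Fin 2 → ℂ := ![mu0 u, mu1 u]

/-- identification of `Fin 2 → ℂ` with the hermitian space `ℂ²` -/
noncomputable def toE2 (v : Fin 2 → ℂ) : EuclideanSpace ℂ (Fin 2) :=
  (WithLp.equiv 2 (Fin 2 → ℂ)).symm v

/-!
On `[0,1]`, `P(-u'') = u(1) - u(0) - u'` has mean zero, so the constant in `P h` drops out of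
`∫ P(-u'') · conj (P h)`. What remains is integrated by parts twice against the primitive
`𝓘 h̄` (with `h` merely integrable, this is Fubini on the triangle `y ≤ x`), giving
`(u(1) - u(0)) · conj μ₁(h) - u(1) · conj μ₀(h) + ∫ u h̄`. The condition `K Γ₁u - Γ₂u ∈ Y^⊥`
with `Γ₁h ∈ Y` replaces `(K Γ₁u | Γ₁h)` by `(Γ₂u | Γ₁h)`, and the two sides agree.
-/

open Set
open scoped ComplexConjugate

theorem integral_mul_primitive_eq_integral_tail_mul {𝕜 : Type*} [RCLike 𝕜] {F g : ℝ → 𝕜}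
    {a b : ℝ} (hab : a ≤ b)
    (hF : IntervalIntegrable F volume a b) (hg : IntervalIntegrable g volume a b) :
    ∫ x in a..b, F x * ∫ y in a..x, g y = ∫ y in a..b, (∫ x in y..b, F x) * g y := by
  set μ := volume.restrict (Ioc a b)
  set φ : ℝ → ℝ → 𝕜 := fun x y =>
    {p : ℝ × ℝ | p.2 ≤ p.1}.indicator (fun p => F p.1 * g p.2) (x, y)
  have hφ : Integrable (Function.uncurry φ) (μ.prod μ) :=
    (hF.1.mul_prod hg.1).indicator (measurableSet_le measurable_snd measurable_fst)
  have hrow : ∀ x ∈ Ioc a b, ∫ y, φ x y ∂μ = F x * ∫ y in a..x, g y := by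
    intro x hx
    have : φ x = (Iic x).indicator (fun y => F x * g y) := by
      ext y; simp [φ, indicator_apply]
    rw [this, setIntegral_indicator measurableSet_Iic, Ioc_inter_Iic, min_eq_right hx.2,
      MeasureTheory.integral_const_mul, integral_of_le hx.1.le]
  have hcol : ∀ y ∈ Ioc a b, ∫ x, φ x y ∂μ = (∫ x in y..b, F x) * g y := by
    intro y hy
    have : (φ · y) = (Ici y).indicator (fun x => F x * g y) := by
      ext x; simp [φ, indicator_apply]
    have hIcc : Ioc a b ∩ Ici y = Icc y b := by
      ext x; simp only [mem_inter_iff, mem_Ioc, mem_Ici, mem_Icc]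
      exact ⟨fun h => ⟨h.2, h.1.2⟩, fun h => ⟨⟨hy.1.trans_le h.1, h.2⟩, h.1⟩⟩
    rw [this, setIntegral_indicator measurableSet_Ici, hIcc, MeasureTheory.integral_mul_const,
      integral_Icc_eq_integral_Ioc, integral_of_le hy.2]
  rw [integral_of_le hab, integral_of_le hab, ← setIntegral_congr_fun measurableSet_Ioc hrow,
    ← setIntegral_congr_fun measurableSet_Ioc hcol]
  exact integral_integral_swap hφ

theorem integral_eq_sub_of_hasDerivWithinAt_of_Icc_subset {E : Type*} [NormedAddCommGroup E]
    [NormedSpace ℝ E] [CompleteSpace E] {f f' : ℝ → E} {s : Set ℝ} {a b : ℝ} (hab : a ≤ b)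
    (hs : Icc a b ⊆ s) (hf : ∀ x ∈ Icc a b, HasDerivWithinAt f (f' x) s x)
    (hf' : IntervalIntegrable f' volume a b) :
    ∫ x in a..b, f' x = f b - f a :=
  integral_eq_sub_of_hasDerivAt_of_le hab (fun x hx => ((hf x hx).continuousWithinAt).mono hs)
    (fun x hx => (hf x (Ioo_subset_Icc_self hx)).hasDerivAt
      (Filter.mem_of_superset (Icc_mem_nhds hx.1 hx.2) hs)) hf'

theorem MeasureTheory.MemLp.intervalIntegrable_of_Ioo {E : Type*} [NormedAddCommGroup E]
    {f : ℝ → E} {p : ENNReal} {a b : ℝ} (hab : a ≤ b) (hp : 1 ≤ p)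
    (hf : MemLp f p (volume.restrict (Ioo a b))) : IntervalIntegrable f volume a b :=
  (intervalIntegrable_iff_integrableOn_Ioo_of_le hab).2 (hf.integrable hp)

theorem continuousOn_Iprim {g : ℝ → ℂ} (hg : IntervalIntegrable g volume 0 1) :
    ContinuousOn (Iprim g) (Icc 0 1) := by
  have := continuousOn_primitive_interval (a := 0) (b := 1) (μ := volume) (f := g)
    (by rw [uIcc_of_le zero_le_one]
        exact (intervalIntegrable_iff_integrableOn_Icc_of_le zero_le_one).1 hg)
  rwa [uIcc_of_le zero_le_one] at this

theorem continuousOn_Pfun {g : ℝ → ℂ} (hg : IntervalIntegrable g volume 0 1) :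
    ContinuousOn (Pfun g) (Icc 0 1) :=
  (continuousOn_Iprim hg).sub continuousOn_const

theorem Iprim_conj (g : ℝ → ℂ) (x : ℝ) : Iprim (fun y => conj (g y)) x = conj (Iprim g x) :=
  intervalIntegral_conj

theorem Pfun_conj (g : ℝ → ℂ) (x : ℝ) : Pfun (fun y => conj (g y)) x = conj (Pfun g x) := by
  simp only [Pfun, Iprim_conj, intervalIntegral_conj, map_sub]

theorem mu0_conj (g : ℝ → ℂ) : mu0 (fun y => conj (g y)) = conj (mu0 g) :=
  intervalIntegral_conj

theorem mu1_conj (g : ℝ → ℂ) : mu1 (fun y => conj (g y)) = conj (mu1 g) := by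
  simp only [mu1, ← intervalIntegral_conj, map_mul, Complex.conj_ofReal]

theorem mu0_neg (g : ℝ → ℂ) : mu0 (fun y => -g y) = -mu0 g :=
  intervalIntegral.integral_neg

theorem Pfun_neg (g : ℝ → ℂ) (x : ℝ) : Pfun (fun y => -g y) x = -Pfun g x := by
  simp only [Pfun, Iprim, intervalIntegral.integral_neg]
  ring

theorem integral_Pfun_eq_zero {g : ℝ → ℂ} (hg : IntervalIntegrable g volume 0 1) :
    ∫ x in (0:ℝ)..1, Pfun g x = 0 := by
  simp only [Pfun]
  rw [integral_sub ((continuousOn_Iprim hg).intervalIntegrable_of_Icc zero_le_one)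
    intervalIntegrable_const, intervalIntegral.integral_const]
  simp

theorem integral_mul_Pfun_of_integral_eq_zero {F g : ℝ → ℂ}
    (hF : IntervalIntegrable F volume 0 1) (hF₀ : ∫ x in (0:ℝ)..1, F x = 0)
    (hg : IntervalIntegrable g volume 0 1) :
    ∫ x in (0:ℝ)..1, F x * Pfun g x = ∫ x in (0:ℝ)..1, F x * Iprim g x := by
  have hFI : IntervalIntegrable (fun x => F x * Iprim g x) volume 0 1 :=
    hF.mul_continuousOn (by rw [uIcc_of_le zero_le_one]; exact continuousOn_Iprim hg)
  simp only [Pfun, mul_sub]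
  rw [integral_sub hFI (hF.mul_const _), intervalIntegral.integral_mul_const, hF₀, zero_mul,
    sub_zero]

section Primitive

variable {v v' : ℝ → ℂ}

theorem Iprim_eq_sub_of_hasDerivWithinAt
    (hv : ∀ x ∈ Icc (0:ℝ) 1, HasDerivWithinAt v (v' x) (Icc 0 1) x)
    (hv' : IntervalIntegrable v' volume 0 1) {x : ℝ} (hx : x ∈ Icc (0:ℝ) 1) :
    Iprim v' x = v x - v 0 :=
  integral_eq_sub_of_hasDerivWithinAt_of_Icc_subset hx.1 (Icc_subset_Icc_right hx.2)
    (fun y hy => hv y (Icc_subset_Icc_right hx.2 hy)) (hv'.mono_set (by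
      rw [uIcc_of_le hx.1, uIcc_of_le zero_le_one]; exact Icc_subset_Icc_right hx.2))

theorem Pfun_eq_sub_of_hasDerivWithinAt
    (hv : ∀ x ∈ Icc (0:ℝ) 1, HasDerivWithinAt v (v' x) (Icc 0 1) x)
    (hv' : IntervalIntegrable v' volume 0 1) {x : ℝ} (hx : x ∈ Icc (0:ℝ) 1) :
    Pfun v' x = v x - ∫ z in (0:ℝ)..1, v z := by
  have hvc : ContinuousOn v (Icc 0 1) := fun y hy => (hv y hy).continuousWithinAt
  rw [Pfun, Iprim_eq_sub_of_hasDerivWithinAt hv hv' hx,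
    integral_congr (g := fun z => v z - v 0) (by
      rw [uIcc_of_le zero_le_one]; exact fun z hz => Iprim_eq_sub_of_hasDerivWithinAt hv hv' hz),
    integral_sub (hvc.intervalIntegrable_of_Icc zero_le_one) intervalIntegrable_const,
    intervalIntegral.integral_const]
  simp

theorem integral_deriv_mul_Iprim
    (hv : ∀ x ∈ Icc (0:ℝ) 1, HasDerivWithinAt v (v' x) (Icc 0 1) x)
    (hv' : IntervalIntegrable v' volume 0 1) {g : ℝ → ℂ} (hg : IntervalIntegrable g volume 0 1) :
    ∫ x in (0:ℝ)..1, v' x * Iprim g x = v 1 * mu0 g - ∫ x in (0:ℝ)..1, v x * g x := by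
  have hvc : ContinuousOn v (uIcc 0 1) := by
    rw [uIcc_of_le zero_le_one]; exact fun y hy => (hv y hy).continuousWithinAt
  have htail : ∀ y ∈ uIcc (0:ℝ) 1, (∫ x in y..1, v' x) * g y = v 1 * g y - v y * g y := by
    rw [uIcc_of_le zero_le_one]
    intro y hy
    rw [integral_eq_sub_of_hasDerivWithinAt_of_Icc_subset hy.2 (Icc_subset_Icc_left hy.1)
      (fun x hx => hv x (Icc_subset_Icc_left hy.1 hx)) (hv'.mono_set (by
        rw [uIcc_of_le hy.2, uIcc_of_le zero_le_one]; exact Icc_subset_Icc_left hy.1)), sub_mul]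
  simp only [Iprim]
  rw [integral_mul_primitive_eq_integral_tail_mul zero_le_one hv' hg, integral_congr htail,
    integral_sub (hg.const_mul _) (hg.continuousOn_mul hvc), intervalIntegral.integral_const_mul,
    mu0]

end Primitive

theorem integral_Iprim_eq_mu1 {g : ℝ → ℂ} (hg : IntervalIntegrable g volume 0 1) :
    ∫ x in (0:ℝ)..1, Iprim g x = mu1 g := by
  have hid : ∀ x ∈ Icc (0:ℝ) 1, HasDerivWithinAt (fun x : ℝ => (x : ℂ)) 1 (Icc 0 1) x :=
    fun x _ => (hasDerivAt_id x).ofReal_comp.hasDerivWithinAt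
  have := integral_deriv_mul_Iprim hid intervalIntegrable_const hg
  simp only [Complex.ofReal_one, one_mul] at this
  rw [this, mu0, mu1,
    ← integral_sub hg (hg.continuousOn_mul Complex.continuous_ofReal.continuousOn)]
  push_cast
  simp only [sub_mul, one_mul]

theorem sum_mul_conj_eq_of_sub_mem_orthogonal (Y : Submodule ℂ (EuclideanSpace ℂ (Fin 2)))
    {a b c : Fin 2 → ℂ} (hab : toE2 (a - b) ∈ Yᗮ) (hc : toE2 c ∈ Y) :
    ∑ i, a i * conj (c i) = ∑ i, b i * conj (c i) := by
  have h0 : inner ℂ (toE2 c) (toE2 (a - b)) = 0 :=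
    Submodule.inner_right_of_mem_orthogonal hc hab
  simpa [PiLp.inner_apply, toE2, sub_mul, sub_eq_zero] using h0

theorem integral_Pfun_neg_mul_Pfun {u u' u'' : ℝ → ℂ}
    (hu' : ∀ x ∈ Icc (0:ℝ) 1, HasDerivWithinAt u (u' x) (Icc 0 1) x)
    (hu'' : ∀ x ∈ Icc (0:ℝ) 1, HasDerivWithinAt u' (u'' x) (Icc 0 1) x)
    (hu''int : IntervalIntegrable u'' volume 0 1) {g : ℝ → ℂ}
    (hg : IntervalIntegrable g volume 0 1) :
    ∫ x in (0:ℝ)..1, Pfun (fun y => -u'' y) x * Pfun g x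
      = (u 1 - u 0) * mu1 g - u 1 * mu0 g + ∫ x in (0:ℝ)..1, u x * g x := by
  have hu'int : IntervalIntegrable u' volume 0 1 :=
    ContinuousOn.intervalIntegrable_of_Icc zero_le_one fun x hx => (hu'' x hx).continuousWithinAt
  have hPu : ∀ x ∈ uIcc (0:ℝ) 1, Pfun (fun y => -u'' y) x = (u 1 - u 0) - u' x := by
    rw [uIcc_of_le zero_le_one]
    intro x hx
    rw [Pfun_neg, Pfun_eq_sub_of_hasDerivWithinAt hu'' hu''int hx,
      integral_eq_sub_of_hasDerivWithinAt_of_Icc_subset zero_le_one subset_rfl hu' hu'int]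
    ring
  have hIg : ContinuousOn (Iprim g) (uIcc 0 1) := by
    rw [uIcc_of_le zero_le_one]; exact continuousOn_Iprim hg
  calc ∫ x in (0:ℝ)..1, Pfun (fun y => -u'' y) x * Pfun g x
      = ∫ x in (0:ℝ)..1, Pfun (fun y => -u'' y) x * Iprim g x :=
        integral_mul_Pfun_of_integral_eq_zero
          ((continuousOn_Pfun hu''int.neg).intervalIntegrable_of_Icc zero_le_one)
          (integral_Pfun_eq_zero hu''int.neg) hg
    _ = ∫ x in (0:ℝ)..1, ((u 1 - u 0) * Iprim g x - u' x * Iprim g x) :=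
        integral_congr fun x hx => by simp only [hPu x hx, sub_mul]
    _ = (u 1 - u 0) * mu1 g - u 1 * mu0 g + ∫ x in (0:ℝ)..1, u x * g x := by
        rw [integral_sub (intervalIntegrable_const.mul_continuousOn hIg)
          (hu'int.mul_continuousOn hIg), intervalIntegral.integral_const_mul,
          integral_Iprim_eq_mu1 hg, integral_deriv_mul_Iprim hu' hu'int hg]
        ring

/-- Weak formulation identity: if `u` is twice continuously differentiable on `[0,1]` with
`K Γ₁u − Γ₂u ∈ Y^⊥` and `h ∈ L²` with `Γ₁h ∈ Y`, then
`∫₀¹ u conj(h) + (K Γ₁u | Γ₁h)_{ℂ²} = (−u″ | h)₋₁`. -/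
theorem stmt12 (Y : Submodule ℂ (EuclideanSpace ℂ (Fin 2)))
    (K : Matrix (Fin 2) (Fin 2) ℂ)
    (u u' u'' : ℝ → ℂ)
    (hu' : ∀ x ∈ Set.Icc (0:ℝ) 1, HasDerivWithinAt u (u' x) (Set.Icc (0:ℝ) 1) x)
    (hu'' : ∀ x ∈ Set.Icc (0:ℝ) 1, HasDerivWithinAt u' (u'' x) (Set.Icc (0:ℝ) 1) x)
    (hcont : ContinuousOn u'' (Set.Icc (0:ℝ) 1))
    (hYperp : toE2 (K.mulVec (Gamma1 u) - ![-(mu0 u'') - u 1, u 1 - u 0]) ∈ Yᗮ)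
    (h : ℝ → ℂ)
    (hh : MemLp h 2 (volume.restrict (Set.Ioo (0:ℝ) 1)))
    (hhY : toE2 (Gamma1 h) ∈ Y) :
    (∫ x in (0:ℝ)..1, u x * (starRingEnd ℂ) (h x)) +
        (∑ i : Fin 2, K.mulVec (Gamma1 u) i * (starRingEnd ℂ) (Gamma1 h i)) =
      (∫ x in (0:ℝ)..1, Pfun (fun y => -(u'' y)) x * (starRingEnd ℂ) (Pfun h x)) +
        mu0 (fun y => -(u'' y)) * (starRingEnd ℂ) (mu0 h) := by
  have hc : IntervalIntegrable (fun y => conj (h y)) volume 0 1 :=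
    hh.star.intervalIntegrable_of_Ioo zero_le_one one_le_two
  rw [sum_mul_conj_eq_of_sub_mem_orthogonal Y hYperp hhY, mu0_neg]
  simp only [← Pfun_conj]
  rw [integral_Pfun_neg_mul_Pfun hu' hu'' (hcont.intervalIntegrable_of_Icc zero_le_one) hc]
  simp only [Fin.sum_univ_two, Gamma1, mu0_conj, mu1_conj, Matrix.cons_val_zero,
    Matrix.cons_val_one, Matrix.cons_val_fin_one]
  ring
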